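/- arXiv:2303.03104 — 7 statements merged into one kernel-verified Lean document; each statement's English description precedes it below -/
import Mathlib

section
/- Work with arrays indexed by Fin 4 over ℝ, with Minkowski metric η = diag(-1,1,1,1) (its inverse is the same matrix); indices are raised and lowered by contracting with η. Let u : Fin 4 → ℝ satisfy Σ_{α,β} η_{αβ} u^α u^β = -1, and write u_β := Σ_γ η_{βγ} u^γ. Let S : Fin 4 → Fin 4 → Fin 4 → ℝ satisfy S^{αβγ} = -S^{βαγ}, and let Δ : Fin 4 → Fin 4 → ℝ satisfy Δ^{αβ} = -Δ^{βα} and Σ_β Δ^{αβ} u_β = 0 for all α. Define the trace T^β := Σ_{μ,ν} η_{μν} S^{βμν}. If the Einstein–Cartan field equation with Weyssenhoff source holds, i.e. S^{αβγ} + η^{γα} T^β - η^{γβ} T^α = Δ^{αβ} u^γ for all α,β,γ, then T^α = 0 for all α and consequently S^{αβγ} = Δ^{αβ} u^γ for all α,β,γ. -/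
open Finset

noncomputable section

/-- Minkowski metric `η = diag(-1,1,1,1)` on `Fin 4` (equal to its own inverse). -/
def η : Fin 4 → Fin 4 → ℝ := fun a b => if a = b then (if a = 0 then -1 else 1) else 0

theorem of_η_mul_of_η : Matrix.of η * Matrix.of η = 1 := by
  ext i j
  fin_cases i <;> fin_cases j <;> simp [Matrix.mul_apply, η]

section Contraction

variable {ι K : Type*} [Fintype ι] [DecidableEq ι] [Field K] {g : Matrix ι ι K}

theorem Matrix.sum_sum_mul_mul_apply_of_mul_self_eq_one (hg : g * g = 1) (T : ι → K) (a : ι) :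
    ∑ b, ∑ c, g b c * (g c a * T b) = T a := by
  have hgg : ∀ b, ∑ c, g b c * g c a = (1 : Matrix ι ι K) b a := fun b => by
    rw [← hg, Matrix.mul_apply]
  simp_rw [← mul_assoc, ← Finset.sum_mul, hgg, Matrix.one_apply, ite_mul, one_mul, zero_mul,
    Finset.sum_ite_eq', Finset.mem_univ, if_true]

theorem Matrix.sum_sum_mul_mul_self_of_mul_self_eq_one (hg : g * g = 1) (x : K) :
    ∑ b, ∑ c, g b c * (g c b * x) = Fintype.card ι * x := by
  have htr : ∑ b, ∑ c, g b c * g c b = Fintype.card ι := by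
    rw [← Matrix.trace_one (n := ι) (R := K), ← hg]
    simp [Matrix.trace, Matrix.mul_apply]
  simp_rw [← mul_assoc, ← Finset.sum_mul, htr]

/-- Contracting the last two slots of the torsion field equation with the metric leaves
`(2 - n) T^α` on the left and the contraction `Δ^{αβ} u_β` on the right. -/
theorem trace_eq_zero_of_torsion_field_equation (hg : g * g = 1)
    (hcard : (Fintype.card ι : K) ≠ 2) (u : ι → K) (S : ι → ι → ι → K) (Δ : ι → ι → K)
    (hΔu : ∀ a, ∑ b, Δ a b * (∑ c, g b c * u c) = 0) (T : ι → K)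
    (hT : ∀ b, T b = ∑ μ, ∑ ν, g μ ν * S b μ ν)
    (hfield : ∀ a b c, S a b c + g c a * T b - g c b * T a = Δ a b * u c) (a : ι) :
    T a = 0 := by
  have hcontract : ∑ b, ∑ c, g b c * (S a b c + g c a * T b - g c b * T a) =
      ∑ b, ∑ c, g b c * (Δ a b * u c) := by
    simp_rw [hfield]
  have hrhs : ∑ b, ∑ c, g b c * (Δ a b * u c) = 0 := by
    rw [← hΔu a]
    simp_rw [Finset.mul_sum]
    exact Finset.sum_congr rfl fun b _ => Finset.sum_congr rfl fun c _ => by ring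
  simp_rw [mul_sub, mul_add, Finset.sum_sub_distrib, Finset.sum_add_distrib, ← hT,
    Matrix.sum_sum_mul_mul_apply_of_mul_self_eq_one hg,
    Matrix.sum_sum_mul_mul_self_of_mul_self_eq_one hg] at hcontract
  rw [hrhs] at hcontract
  have h2 : (2 - (Fintype.card ι : K)) * T a = 0 := by linear_combination hcontract
  exact (mul_eq_zero.mp h2).resolve_left (sub_ne_zero.mpr hcard.symm)

end Contraction

theorem weyssenhoff_torsion_general (u : Fin 4 → ℝ)
    (S : Fin 4 → Fin 4 → Fin 4 → ℝ)
    (Δ : Fin 4 → Fin 4 → ℝ)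
    (hΔu : ∀ a, ∑ b, Δ a b * (∑ c, η b c * u c) = 0)
    (T : Fin 4 → ℝ)
    (hT : ∀ b, T b = ∑ μ, ∑ ν, η μ ν * S b μ ν)
    (hfield : ∀ a b c, S a b c + η c a * T b - η c b * T a = Δ a b * u c) :
    (∀ a, T a = 0) ∧ (∀ a b c, S a b c = Δ a b * u c) := by
  have hT0 : ∀ a, T a = 0 :=
    trace_eq_zero_of_torsion_field_equation of_η_mul_of_η (by norm_num) u S Δ hΔu T hT hfield
  refine ⟨hT0, fun a b c => ?_⟩
  simpa [hT0] using hfield a b c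

/-- For a Weyssenhoff source, the Einstein–Cartan torsion field equation
`S^{αβγ} + η^{γα} T^β - η^{γβ} T^α = Δ^{αβ} u^γ` (with `T^β` the torsion trace) forces
`T = 0` and hence `S^{αβγ} = Δ^{αβ} u^γ`. -/
theorem weyssenhoff_torsion (u : Fin 4 → ℝ)
    (hu : ∑ a, ∑ b, η a b * u a * u b = -1)
    (S : Fin 4 → Fin 4 → Fin 4 → ℝ)
    (hS : ∀ a b c, S a b c = - S b a c)
    (Δ : Fin 4 → Fin 4 → ℝ)
    (hΔanti : ∀ a b, Δ a b = - Δ b a)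
    (hΔu : ∀ a, ∑ b, Δ a b * (∑ c, η b c * u c) = 0)
    (T : Fin 4 → ℝ)
    (hT : ∀ b, T b = ∑ μ, ∑ ν, η μ ν * S b μ ν)
    (hfield : ∀ a b c, S a b c + η c a * T b - η c b * T a = Δ a b * u c) :
    (∀ a, T a = 0) ∧ (∀ a b c, S a b c = Δ a b * u c) :=
  weyssenhoff_torsion_general u S Δ hΔu T hT hfield
end
end

section
/- Let V be a real vector space and let R : V⁴ → ℝ be a quadrilinear map satisfying R(x,y,z,w) = -R(y,x,z,w) and R(x,y,z,w) = -R(x,y,w,z) for all x,y,z,w (antisymmetry in the first pair and in the last pair). Define the quadrilinear map A by A(x,y,z,w) := (1/3)(R(x,y,z,w) + R(y,z,x,w) + R(z,x,y,w)), i.e. A_{αβγδ} = R_{[αβγ]δ}. Then for all x,y,z,w ∈ V: 2·R(z,w,x,y) = 2·R(x,y,z,w) + 3·A(x,z,y,w) + 3·A(w,x,y,z) + 3·A(z,w,x,y) + 3·A(y,w,z,x). -/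
section PairExchange

variable {α M : Type*} [AddCommGroup M]

def cyclicSum (R : α → α → α → α → M) (x y z w : α) : M :=
  R x y z w + R y z x w + R z x y w

/-- Of the twelve terms of the four cyclic sums, eight cancel in pairs by antisymmetry in the
last pair; the remaining four are `R (z, w, x, y)` twice and `R (x, y, z, w)` negated twice. -/
theorem pair_exchange_of_antisymm {R : α → α → α → α → M}
    (h₁ : ∀ x y z w, R x y z w = -R y x z w) (h₂ : ∀ x y z w, R x y z w = -R x y w z)
    (x y z w : α) :
    2 • R z w x y = 2 • R x y z w + cyclicSum R x z y w + cyclicSum R w x y z +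
      cyclicSum R z w x y + cyclicSum R y w z x := by
  simp only [cyclicSum]
  rw [h₂ x z w y, h₂ z y w x, h₂ w x z y, h₂ y w z x, h₁ y x z w, h₂ x y w z, h₁ w z y x,
    h₂ z w y x]
  abel

end PairExchange

/-- For a quadrilinear map `R` antisymmetric in its first pair and in its
last pair of arguments, with `A(x,y,z,w) = (1/3)(R(x,y,z,w) + R(y,z,x,w) + R(z,x,y,w))`
(the antisymmetrization `R_{[αβγ]δ}`), the pair-exchange identity
`2 R(z,w,x,y) = 2 R(x,y,z,w) + 3 A(x,z,y,w) + 3 A(w,x,y,z) + 3 A(z,w,x,y) + 3 A(y,w,z,x)`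
holds. -/
theorem riemann_pair_exchange {V : Type*} [AddCommGroup V] [Module ℝ V]
    (R : V →ₗ[ℝ] V →ₗ[ℝ] V →ₗ[ℝ] V →ₗ[ℝ] ℝ)
    (h1 : ∀ x y z w : V, R x y z w = - R y x z w)
    (h2 : ∀ x y z w : V, R x y z w = - R x y w z)
    (A : V → V → V → V → ℝ)
    (hA : ∀ x y z w : V, A x y z w = (1/3) * (R x y z w + R y z x w + R z x y w)) :
    ∀ x y z w : V, 2 * R z w x y =
      2 * R x y z w + 3 * A x z y w + 3 * A w x y z + 3 * A z w x y + 3 * A y w z x := by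
  intro x y z w
  have three_mul_A (x y z w : V) :
      3 * A x y z w = cyclicSum (fun x y z w => R x y z w) x y z w := by
    rw [hA, cyclicSum]
    ring
  simpa only [three_mul_A, nsmul_eq_mul, Nat.cast_ofNat] using
    pair_exchange_of_antisymm (R := fun x y z w => R x y z w) h1 h2 x y z w
end

section
/- Work with arrays indexed by Fin 4 over ℝ, with Minkowski metric η = diag(-1,1,1,1); indices are raised and lowered with η. Let R : Fin 4⁴ → ℝ satisfy R_{αβγδ} = -R_{βαγδ} and R_{αβγδ} = -R_{αβδγ}. Define the Ricci tensor Ric_{αβ} := Σ_{μ,ν} R_{αμβν} η^{μν}, the Ricci scalar Rs := Σ_{α,β} η^{αβ} Ric_{αβ}, and the Weyl tensor C_{αβγδ} := R_{αβγδ} - ½(Ric_{αγ} η_{δβ} - Ric_{αδ} η_{γβ}) + ½(Ric_{βγ} η_{δα} - Ric_{βδ} η_{γα}) + (Rs/6)(η_{αγ} η_{δβ} - η_{αδ} η_{γβ}). Then the antisymmetrization of C over its first three indices satisfies C_{[αβγ]δ} = R_{[αβγ]δ} + R_{[αβ} η_{γ]δ}, where X_{[αβγ]δ} := (1/6) Σ_{σ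 ∈ S₃} sgn(σ) X_{σ(α)σ(β)σ(γ)δ} and R_{[αβ} η_{γ]δ} := (1/6) Σ_{σ ∈ S₃} sgn(σ) Ric_{σ(α)σ(β)} η_{σ(γ)δ} (antisymmetrization over α,β,γ in both cases). -/
/-!
Writing the trace part of the Weyl tensor with the Kulkarni–Nomizu product,
`C = R - ½ Ric ⊙ η + (Rs/12) η ⊙ η`. Antisymmetrizing `(h ⊙ k)_{xyzd}` over `x, y, z` for a
symmetric `k`, two of its four terms die and the other two each give `-h_{[xy} k_{z]d}`;
hence `(Ric ⊙ η)_{[abc]d} = -2 Ric_{[ab} η_{c]d}`, while `η_{[ab} η_{c]d} = 0`.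
-/

open Finset

noncomputable section

/-- Antisymmetrization of a 3-index array over its three indices with weight `1/3!`:
`X_{[abc]} = (1/6) Σ_{σ ∈ S₃} sgn(σ) X_{σ(a)σ(b)σ(c)}`. -/
def antisym3 (X : Fin 4 → Fin 4 → Fin 4 → ℝ) (a b c : Fin 4) : ℝ :=
  (1/6) * ∑ σ : Equiv.Perm (Fin 3),
    ((Equiv.Perm.sign σ : ℤ) : ℝ) *
      X (![a, b, c] (σ 0)) (![a, b, c] (σ 1)) (![a, b, c] (σ 2))

def kulkarniNomizu {ι R : Type*} [Ring R] (h k : ι → ι → R) (a b c d : ι) : R :=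
  h a c * k b d + h b d * k a c - h a d * k b c - h b c * k a d

theorem η_comm (a b : Fin 4) : η a b = η b a := by
  unfold η
  split_ifs <;> simp_all

theorem antisym3_apply (X : Fin 4 → Fin 4 → Fin 4 → ℝ) (a b c : Fin 4) :
    antisym3 X a b c =
      (X a b c - X b a c - X c b a - X a c b + X b c a + X c a b) / 6 := by
  have univ_perm : (univ : Finset (Equiv.Perm (Fin 3))) =
      {1, .swap 0 1, .swap 0 2, .swap 1 2, .swap 0 1 * .swap 1 2, .swap 1 2 * .swap 0 1} := by
    decide
  rw [antisym3, univ_perm]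
  simp +decide [Equiv.swap_apply_def]
  ring

section Antisym3

variable (X Y : Fin 4 → Fin 4 → Fin 4 → ℝ) (a b c : Fin 4)

theorem antisym3_add :
    antisym3 (fun x y z => X x y z + Y x y z) a b c = antisym3 X a b c + antisym3 Y a b c := by
  simp only [antisym3_apply]
  ring

theorem antisym3_sub :
    antisym3 (fun x y z => X x y z - Y x y z) a b c = antisym3 X a b c - antisym3 Y a b c := by
  simp only [antisym3_apply]
  ring

theorem antisym3_const_mul (r : ℝ) :
    antisym3 (fun x y z => r * X x y z) a b c = r * antisym3 X a b c := by
  simp only [antisym3_apply]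
  ring

end Antisym3

theorem antisym3_mul_eq_zero_of_symm {g k : Fin 4 → Fin 4 → ℝ} (hg : ∀ i j, g i j = g j i)
    (d a b c : Fin 4) : antisym3 (fun x y z => g x y * k z d) a b c = 0 := by
  simp only [antisym3_apply, hg b a, hg c a, hg c b]
  ring

theorem antisym3_kulkarniNomizu (h : Fin 4 → Fin 4 → ℝ) {k : Fin 4 → Fin 4 → ℝ}
    (hk : ∀ i j, k i j = k j i) (d a b c : Fin 4) :
    antisym3 (fun x y z => kulkarniNomizu h k x y z d) a b c =
      -2 * antisym3 (fun x y z => h x y * k z d) a b c := by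
  simp only [antisym3_apply, kulkarniNomizu, hk b a, hk c a, hk c b]
  ring

theorem weyl_first_three_antisymmetrization_general
    (R : Fin 4 → Fin 4 → Fin 4 → Fin 4 → ℝ)
    (Ric : Fin 4 → Fin 4 → ℝ)
    (Rs : ℝ)
    (C : Fin 4 → Fin 4 → Fin 4 → Fin 4 → ℝ)
    (hC : ∀ a b c d, C a b c d = R a b c d
      - (1/2) * (Ric a c * η d b - Ric a d * η c b)
      + (1/2) * (Ric b c * η d a - Ric b d * η c a)
      + (Rs/6) * (η a c * η d b - η a d * η c b)) :
    ∀ a b c d, antisym3 (fun x y z => C x y z d) a b c =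
      antisym3 (fun x y z => R x y z d) a b c
      + antisym3 (fun x y z => Ric x y * η z d) a b c := by
  intro a b c d
  have hC_kn : ∀ x y z, C x y z d = R x y z d - (1/2) * kulkarniNomizu Ric η x y z d
      + (Rs/12) * kulkarniNomizu η η x y z d := by
    intro x y z
    rw [hC]
    simp only [kulkarniNomizu, η_comm d y, η_comm d x, η_comm z y, η_comm z x]
    ring
  simp only [hC_kn, antisym3_add, antisym3_sub, antisym3_const_mul,
    antisym3_kulkarniNomizu _ η_comm, antisym3_mul_eq_zero_of_symm η_comm]
  ring

/-- For the 4-dimensional Weyl tensor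
`C_{αβγδ} = R_{αβγδ} - ½(Ric_{αγ} η_{δβ} - Ric_{αδ} η_{γβ}) + ½(Ric_{βγ} η_{δα} - Ric_{βδ} η_{γα})
  + (Rs/6)(η_{αγ} η_{δβ} - η_{αδ} η_{γβ})`
built from a Riemann-like tensor (antisymmetric in each index pair), one has
`C_{[αβγ]δ} = R_{[αβγ]δ} + R_{[αβ} η_{γ]δ}`. -/
theorem weyl_first_three_antisymmetrization
    (R : Fin 4 → Fin 4 → Fin 4 → Fin 4 → ℝ)
    (h1 : ∀ a b c d, R a b c d = - R b a c d)
    (h2 : ∀ a b c d, R a b c d = - R a b d c)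
    (Ric : Fin 4 → Fin 4 → ℝ)
    (hRic : ∀ a b, Ric a b = ∑ m, ∑ n, R a m b n * η m n)
    (Rs : ℝ)
    (hRs : Rs = ∑ a, ∑ b, η a b * Ric a b)
    (C : Fin 4 → Fin 4 → Fin 4 → Fin 4 → ℝ)
    (hC : ∀ a b c d, C a b c d = R a b c d
      - (1/2) * (Ric a c * η d b - Ric a d * η c b)
      + (1/2) * (Ric b c * η d a - Ric b d * η c a)
      + (Rs/6) * (η a c * η d b - η a d * η c b)) :
    ∀ a b c d, antisym3 (fun x y z => C x y z d) a b c =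
      antisym3 (fun x y z => R x y z d) a b c
      + antisym3 (fun x y z => Ric x y * η z d) a b c :=
  weyl_first_three_antisymmetrization_general R Ric Rs C hC
end
end

section
/- Let Λ ∈ ℝ and let ℓ, μ, p, s : ℝ → ℝ be functions with ℓ twice differentiable and everywhere positive, and μ, s differentiable. Define θ := 3 ℓ'/ℓ and suppose for all τ ∈ ℝ: (Raychaudhuri) θ'(τ) = -4π(μ(τ) + 3 p(τ)) + Λ - (1/3) θ(τ)² + 2 s(τ); (torsion conservation) s'(τ) = -2 θ(τ) s(τ); (energy conservation) μ'(τ) = -θ(τ)(μ(τ) + p(τ)). Define the spatial Ricci scalar R3 := 2(-(1/3) θ² - s + 8π μ + Λ). Then the function τ ↦ R3(τ) · ℓ(τ)² has zero derivative everywhere; in particular there exists a constant K ∈ ℝ such that R3(τ) = 6K/ℓ(τ)² for all τ. -/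
open Real

/-! Along the flow the spatial Ricci scalar obeys `³R' = -(2/3) θ ³R`: the Raychaudhuri equation
and the two conservation laws make every other term cancel. Since `θ = 3 ℓ'/ℓ`, this says
`³R' = -2 (ℓ'/ℓ) ³R`, i.e. `³R` scales like `ℓ⁻²`, so `³R ℓ²` is constant. -/

theorem hasDerivAt_spatialRicci {Λ : ℝ} {θ μ p s : ℝ → ℝ} {τ : ℝ}
    (hθ : HasDerivAt θ (-4 * π * (μ τ + 3 * p τ) + Λ - (1/3) * θ τ ^ 2 + 2 * s τ) τ)
    (hs : HasDerivAt s (-2 * θ τ * s τ) τ) (hμ : HasDerivAt μ (-(θ τ) * (μ τ + p τ)) τ) :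
    HasDerivAt (fun t => 2 * (-(1/3) * θ t ^ 2 - s t + 8 * π * μ t + Λ))
      (-(2/3) * θ τ * (2 * (-(1/3) * θ τ ^ 2 - s τ + 8 * π * μ τ + Λ))) τ :=
  ((((hθ.fun_pow 2).const_mul (-(1/3))).sub hs).add (hμ.const_mul (8 * π))
    |>.add_const Λ |>.const_mul 2).congr_deriv (by push_cast; ring)

theorem hasDerivAt_mul_sq_eq_zero {R ℓ : ℝ → ℝ} {ℓ' τ : ℝ} (hℓ : HasDerivAt ℓ ℓ' τ)
    (hR : HasDerivAt R (-2 * (ℓ' / ℓ τ) * R τ) τ) :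
    HasDerivAt (fun t => R t * ℓ t ^ 2) 0 τ := by
  refine (hR.mul (hℓ.fun_pow 2)).congr_deriv ?_
  rcases eq_or_ne (ℓ τ) 0 with hℓ0 | hℓ0
  · simp [hℓ0]
  · field_simp
    ring

theorem eq_div_sq_of_hasDerivAt_mul_sq_eq_zero {R ℓ : ℝ → ℝ}
    (h : ∀ τ, HasDerivAt (fun t => R t * ℓ t ^ 2) 0 τ) (hℓ0 : ∀ τ, ℓ τ ≠ 0) (τ : ℝ) :
    R τ = R 0 * ℓ 0 ^ 2 / ℓ τ ^ 2 := by
  have hconst := is_const_of_deriv_eq_zero (fun t => (h t).differentiableAt)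
    (fun t => (h t).deriv) τ 0
  rw [← hconst]
  field_simp [hℓ0 τ]

/-- In the Einstein-Cartan cosmology, from the Raychaudhuri equation,
the torsion conservation `s' = -2θs`, and energy conservation, the quantity
`³R ℓ²` (with `³R = 2(-θ²/3 - s + 8πμ + Λ)`) has zero derivative; hence
`³R = 6K/ℓ²` for a constant `K`. -/
theorem spatial_curvature_constant (Λ : ℝ) (ℓ μ p s : ℝ → ℝ)
    (hℓd : Differentiable ℝ ℓ) (hℓd2 : Differentiable ℝ (deriv ℓ))
    (hℓpos : ∀ τ, 0 < ℓ τ)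
    (hμd : Differentiable ℝ μ) (hsd : Differentiable ℝ s)
    (θ : ℝ → ℝ) (hθ : ∀ τ, θ τ = 3 * deriv ℓ τ / ℓ τ)
    (hRay : ∀ τ, deriv θ τ =
      -4 * π * (μ τ + 3 * p τ) + Λ - (1/3) * θ τ ^ 2 + 2 * s τ)
    (hTor : ∀ τ, deriv s τ = -2 * θ τ * s τ)
    (hEn : ∀ τ, deriv μ τ = -(θ τ) * (μ τ + p τ))
    (R3 : ℝ → ℝ)
    (hR3 : ∀ τ, R3 τ = 2 * (-(1/3) * θ τ ^ 2 - s τ + 8 * π * μ τ + Λ)) :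
    (∀ τ, deriv (fun τ' => R3 τ' * ℓ τ' ^ 2) τ = 0) ∧
      ∃ K : ℝ, ∀ τ, R3 τ = 6 * K / ℓ τ ^ 2 := by
  have hℓ0 : ∀ τ, ℓ τ ≠ 0 := fun τ => (hℓpos τ).ne'
  have hθd : Differentiable ℝ θ := by
    rw [funext hθ]
    exact (hℓd2.const_mul 3).div hℓd hℓ0
  have hR3' : ∀ τ, HasDerivAt R3 (-2 * (deriv ℓ τ / ℓ τ) * R3 τ) τ := fun τ => by
    have h := hasDerivAt_spatialRicci (hRay τ ▸ (hθd τ).hasDerivAt)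
      (hTor τ ▸ (hsd τ).hasDerivAt) (hEn τ ▸ (hμd τ).hasDerivAt)
    rw [← funext hR3, ← hR3, hθ] at h
    convert h using 1
    ring
  have hconst : ∀ τ, HasDerivAt (fun t => R3 t * ℓ t ^ 2) 0 τ := fun τ =>
    hasDerivAt_mul_sq_eq_zero (hℓd τ).hasDerivAt (hR3' τ)
  refine ⟨fun τ => (hconst τ).deriv, R3 0 * ℓ 0 ^ 2 / 6, fun τ => ?_⟩
  rw [eq_div_sq_of_hasDerivAt_mul_sq_eq_zero hconst hℓ0 τ]
  ring
end

section
/- Let ℓ, s : ℝ → ℝ be differentiable functions with ℓ(τ) > 0 for all τ, and suppose s satisfies the torsion conservation law s'(τ) = -6 (ℓ'(τ)/ℓ(τ)) s(τ) for all τ (equivalently s' = -2θ s with θ = 3ℓ'/ℓ). Let the spatial curvature be that of the open case, R3(τ) := -6/ℓ(τ)², and define h(τ) := -(R3(τ)/3) · s(τ) = 2 s(τ)/ℓ(τ)². Then τ ↦ h(τ) · ℓ(τ)⁸ is constant; i.e. for all τ, τ₀ ∈ ℝ, h(τ) = h(τ₀) · (ℓ(τ₀)/ℓ(τ))⁸.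 In particular the squared magnetic Weyl tensor scales as 1/ℓ⁸. -/
/-! The conservation law `s' = -n (ℓ'/ℓ) s` says exactly that `(s ℓⁿ)' = ℓⁿ (s' + n (ℓ'/ℓ) s) = 0`,
so `s ℓ⁶` is a first integral. In the open case `h ℓ⁸ = 2 s ℓ⁶`, hence `h ℓ⁸` is constant too. -/

theorem mul_pow_eq_of_deriv_eq_neg_mul_logDeriv {ℓ s : ℝ → ℝ} (n : ℕ)
    (hℓ : Differentiable ℝ ℓ) (hs : Differentiable ℝ s) (hℓ0 : ∀ τ, ℓ τ ≠ 0)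
    (hds : ∀ τ, deriv s τ = -n * (deriv ℓ τ / ℓ τ) * s τ) (a b : ℝ) :
    s a * ℓ a ^ n = s b * ℓ b ^ n := by
  have hderiv : ∀ τ, deriv (fun t => s t * ℓ t ^ n) τ = 0 := by
    intro τ
    rw [((hs τ).hasDerivAt.fun_mul ((hℓ τ).hasDerivAt.fun_pow n)).deriv, hds τ]
    have := hℓ0 τ
    -- the power rule leaves `ℓ ^ (n - 1)` with truncated subtraction
    cases n with
    | zero => simp
    | succ m => field_simp; push_cast; ring
  exact is_const_of_deriv_eq_zero (hs.mul (hℓ.pow n)) hderiv a b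

theorem eq_mul_div_pow_of_mul_pow_eq {K : Type*} [Field K] {a b x y : K} {n : ℕ} (hx : x ≠ 0)
    (h : a * x ^ n = b * y ^ n) : a = b * (y / x) ^ n := by
  rw [div_pow, mul_div_assoc', ← h, mul_div_cancel_right₀ _ (pow_ne_zero n hx)]

/-- In the open (`³R = -6/ℓ²`) Einstein-Cartan cosmology, with the torsion
conservation law `s' = -6 (ℓ'/ℓ) s`, the squared magnetic Weyl tensor
`h = -(³R/3)·s = 2s/ℓ²` satisfies `h·ℓ⁸ = const`, i.e. `h(τ) = h(τ₀) (ℓ(τ₀)/ℓ(τ))⁸`: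
it scales as `1/ℓ⁸`. -/
theorem magnetic_weyl_scaling (ℓ s : ℝ → ℝ)
    (hℓd : Differentiable ℝ ℓ) (hsd : Differentiable ℝ s)
    (hℓpos : ∀ τ, 0 < ℓ τ)
    (hTor : ∀ τ, deriv s τ = -6 * (deriv ℓ τ / ℓ τ) * s τ)
    (R3 : ℝ → ℝ) (hR3 : ∀ τ, R3 τ = -6 / ℓ τ ^ 2)
    (h : ℝ → ℝ) (hh : ∀ τ, h τ = -(R3 τ / 3) * s τ) :
    (∀ τ₁ τ₂, h τ₁ * ℓ τ₁ ^ 8 = h τ₂ * ℓ τ₂ ^ 8) ∧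
      ∀ τ τ₀, h τ = h τ₀ * (ℓ τ₀ / ℓ τ) ^ 8 := by
  have hℓ0 : ∀ τ, ℓ τ ≠ 0 := fun τ => (hℓpos τ).ne'
  have hs_const := mul_pow_eq_of_deriv_eq_neg_mul_logDeriv 6 hℓd hsd hℓ0 (by exact_mod_cast hTor)
  have hh_open : ∀ τ, h τ * ℓ τ ^ 8 = 2 * (s τ * ℓ τ ^ 6) := by
    intro τ
    have := hℓ0 τ
    rw [hh τ, hR3 τ]
    field_simp
    ring
  have hh_const : ∀ τ₁ τ₂, h τ₁ * ℓ τ₁ ^ 8 = h τ₂ * ℓ τ₂ ^ 8 := fun τ₁ τ₂ => by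
    rw [hh_open, hh_open, hs_const τ₁ τ₂]
  exact ⟨hh_const, fun τ τ₀ => eq_mul_div_pow_of_mul_pow_eq (hℓ0 τ) (hh_const τ τ₀)⟩
end

section
/- Let ℓ : ℝ → ℝ be twice differentiable with ℓ(τ) > 0 for all τ; let t : ℝ → ℝ satisfy t'(τ) = 1/ℓ(τ) for all τ (conformal time); let f : ℝ → ℝ be twice differentiable, and let k ∈ ℝ. Define θ := 3 ℓ'/ℓ, H := ℓ'/ℓ, and h(τ) := f(t(τ))/ℓ(τ)⁴. Then for all τ ∈ ℝ: h''(τ) + h(τ)·[k²/ℓ(τ)² + (4/3)(θ'(τ) - (4/3)θ(τ)²)] = (1/ℓ(τ)⁶)·[f''(t(τ)) - 9 ℓ(τ) H(τ) f'(t(τ)) + k² f(t(τ))]. In particular, h solves the mode equation ḧ + h[k²/ℓ² + (4/3)(θ̇ - (4/3)θ²)] = 0 if and only if f''(t(τ)) - 9 ℓ(τ) H(τ) f'(t(τ)) + k² f(t(τ)) = 0 for all τ. -/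
/-! Since `dt/dτ = 1/ℓ`, every τ-derivative of `h = f(t)/ℓ⁴` raises the power of `ℓ` in the
denominator by one, giving `ℓ⁶ ḧ = f'' - 9ℓ̇ f' - (4ℓℓ̈ - 20ℓ̇²) f` along `t`. The curvature term
`(4/3)(θ̇ - (4/3)θ²) = (4ℓℓ̈ - 20ℓ̇²)/ℓ²` cancels exactly the terms in `f` without derivatives, and
`ℓ̇ = ℓH`. -/

theorem HasDerivAt.div_pow {𝕜 : Type*} [NontriviallyNormedField 𝕜] {u ℓ : 𝕜 → 𝕜} {u' ℓ' x : 𝕜}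
    (hu : HasDerivAt u u' x) (hℓ : HasDerivAt ℓ ℓ' x) (hx : ℓ x ≠ 0) (n : ℕ) :
    HasDerivAt (fun y => u y / ℓ y ^ n) ((u' * ℓ x - n * u x * ℓ') / ℓ x ^ (n + 1)) x := by
  refine (hu.fun_div (hℓ.fun_pow n) (pow_ne_zero n hx)).congr_deriv ?_
  rcases n with _ | n
  · field_simp
    simp
  · rw [Nat.add_sub_cancel]
    field_simp
    push_cast
    ring

theorem deriv_deriv_comp_div_pow_four {ℓ t f : ℝ → ℝ}
    (hℓd : Differentiable ℝ ℓ) (hℓd2 : Differentiable ℝ (deriv ℓ)) (hne : ∀ τ, ℓ τ ≠ 0)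
    (ht : ∀ τ, HasDerivAt t (1 / ℓ τ) τ)
    (hfd : Differentiable ℝ f) (hfd2 : Differentiable ℝ (deriv f)) (τ : ℝ) :
    deriv (deriv fun s => f (t s) / ℓ s ^ 4) τ = (deriv (deriv f) (t τ)
      - 9 * deriv ℓ τ * deriv f (t τ)
      - (4 * ℓ τ * deriv (deriv ℓ) τ - 20 * deriv ℓ τ ^ 2) * f (t τ)) / ℓ τ ^ 6 := by
  have hℓ : ∀ τ, HasDerivAt ℓ (deriv ℓ τ) τ := fun τ => (hℓd τ).hasDerivAt
  have hf : ∀ τ, HasDerivAt (fun s => f (t s)) (deriv f (t τ) * (1 / ℓ τ)) τ :=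
    fun τ => (hfd (t τ)).hasDerivAt.comp τ (ht τ)
  have hf' : HasDerivAt (fun s => deriv f (t s)) (deriv (deriv f) (t τ) * (1 / ℓ τ)) τ :=
    (hfd2 (t τ)).hasDerivAt.comp τ (ht τ)
  have hdh : deriv (fun s => f (t s) / ℓ s ^ 4) =
      fun τ => (deriv f (t τ) - 4 * (f (t τ) * deriv ℓ τ)) / ℓ τ ^ 5 := by
    funext τ
    rw [((hf τ).div_pow (hℓ τ) (hne τ) 4).deriv]
    field_simp [hne τ]
    ring
  rw [hdh, ((hf'.fun_sub (((hf τ).fun_mul (hℓd2 τ).hasDerivAt).const_mul 4)).div_pow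
    (hℓ τ) (hne τ) 5).deriv]
  field_simp [hne τ]
  ring

/-- change of variables for the gravitational-wave mode equation.
With `θ = 3ℓ'/ℓ`, `H = ℓ'/ℓ`, conformal time `t' = 1/ℓ`, and `h(τ) = f(t(τ))/ℓ(τ)⁴`:
`h'' + h[k²/ℓ² + (4/3)(θ' - (4/3)θ²)] = (1/ℓ⁶)[f''(t) - 9ℓH f'(t) + k² f(t)]`,
hence `h` solves the mode equation iff `f'' - 9ℓH f' + k² f = 0` along `t`. -/
theorem mode_equation_conformal_time (ℓ t f : ℝ → ℝ) (k : ℝ)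
    (hℓd : Differentiable ℝ ℓ) (hℓd2 : Differentiable ℝ (deriv ℓ))
    (hℓpos : ∀ τ, 0 < ℓ τ)
    (ht : ∀ τ, HasDerivAt t (1 / ℓ τ) τ)
    (hfd : Differentiable ℝ f) (hfd2 : Differentiable ℝ (deriv f))
    (θ Hb h : ℝ → ℝ)
    (hθ : ∀ τ, θ τ = 3 * deriv ℓ τ / ℓ τ)
    (hHb : ∀ τ, Hb τ = deriv ℓ τ / ℓ τ)
    (hh : ∀ τ, h τ = f (t τ) / ℓ τ ^ 4) :
    (∀ τ, deriv (deriv h) τ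
        + h τ * (k ^ 2 / ℓ τ ^ 2 + (4/3) * (deriv θ τ - (4/3) * θ τ ^ 2)) =
      (1 / ℓ τ ^ 6) *
        (deriv (deriv f) (t τ) - 9 * ℓ τ * Hb τ * deriv f (t τ) + k ^ 2 * f (t τ))) ∧
    ((∀ τ, deriv (deriv h) τ
        + h τ * (k ^ 2 / ℓ τ ^ 2 + (4/3) * (deriv θ τ - (4/3) * θ τ ^ 2)) = 0) ↔
      ∀ τ, deriv (deriv f) (t τ) - 9 * ℓ τ * Hb τ * deriv f (t τ) + k ^ 2 * f (t τ) = 0) := by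
  have hne : ∀ τ, ℓ τ ≠ 0 := fun τ => (hℓpos τ).ne'
  have hdθ : ∀ τ, deriv θ τ =
      (3 * deriv (deriv ℓ) τ * ℓ τ - 3 * deriv ℓ τ * deriv ℓ τ) / ℓ τ ^ 2 := fun τ => by
    rw [funext hθ, (((hℓd2 τ).hasDerivAt.const_mul 3).fun_div (hℓd τ).hasDerivAt (hne τ)).deriv]
  have hmode : ∀ τ, deriv (deriv h) τ
      + h τ * (k ^ 2 / ℓ τ ^ 2 + (4/3) * (deriv θ τ - (4/3) * θ τ ^ 2)) =
      (1 / ℓ τ ^ 6) *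
        (deriv (deriv f) (t τ) - 9 * ℓ τ * Hb τ * deriv f (t τ) + k ^ 2 * f (t τ)) := by
    intro τ
    rw [funext hh, deriv_deriv_comp_div_pow_four hℓd hℓd2 hne ht hfd hfd2, hdθ, hθ, hHb]
    field_simp [hne τ]
    ring
  refine ⟨hmode, forall_congr' fun τ => ?_⟩
  rw [hmode τ, mul_eq_zero, or_iff_right (one_div_ne_zero (pow_ne_zero 6 (hne τ)))]
end

section
/- Let Λ ∈ ℝ and let θ, μ, p, s, N : ℝ → ℝ with θ and N differentiable. Suppose for all τ: (i) N'(τ) = (2/3) θ(τ) N(τ); (ii) θ'(τ) = -4π(μ(τ) + 3p(τ)) + Λ - θ(τ)²/3 + 2 s(τ); and define R3(τ) := 2(-θ(τ)²/3 - s(τ) + 8π μ(τ) + Λ). Then N is twice differentiable and for all τ: N''(τ) = (1/3)·(8π(μ(τ) - 3 p(τ)) + 4Λ + 2 s(τ) - R3(τ)) · N(τ). -/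
open Real

theorem hasDerivAt_deriv_of_deriv_eq_mul {𝕜 : Type*} [NontriviallyNormedField 𝕜] {f g : 𝕜 → 𝕜}
    (hf : Differentiable 𝕜 f) (hg : Differentiable 𝕜 g) (h : ∀ x, deriv f x = g x * f x) (x : 𝕜) :
    HasDerivAt (deriv f) ((deriv g x + g x ^ 2) * f x) x := by
  have hderiv : deriv f = fun x => g x * f x := funext h
  rw [hderiv]
  exact ((hg x).hasDerivAt.mul (hf x).hasDerivAt).congr_deriv (by rw [h]; ring)

/-- tidal relation for the squared norm `N = n_δ n^δ` of the separation
vector: from `N' = (2/3)θN`, the Raychaudhuri equation, and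
`³R = 2(-θ²/3 - s + 8πμ + Λ)`, one gets
`N'' = (1/3)(8π(μ - 3p) + 4Λ + 2s - ³R) N`. -/
theorem tidal_acceleration (Λ : ℝ) (θ μ p s N : ℝ → ℝ)
    (hθd : Differentiable ℝ θ) (hNd : Differentiable ℝ N)
    (hN' : ∀ τ, deriv N τ = (2/3) * θ τ * N τ)
    (hRay : ∀ τ, deriv θ τ = -4 * π * (μ τ + 3 * p τ) + Λ - θ τ ^ 2 / 3 + 2 * s τ)
    (R3 : ℝ → ℝ)
    (hR3 : ∀ τ, R3 τ = 2 * (-θ τ ^ 2 / 3 - s τ + 8 * π * μ τ + Λ)) :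
    Differentiable ℝ (deriv N) ∧
      ∀ τ, deriv (deriv N) τ =
        (1/3) * (8 * π * (μ τ - 3 * p τ) + 4 * Λ + 2 * s τ - R3 τ) * N τ := by
  have hN'' := hasDerivAt_deriv_of_deriv_eq_mul hNd (hθd.const_mul (2/3)) hN'
  refine ⟨fun τ => (hN'' τ).differentiableAt, fun τ => ?_⟩
  rw [(hN'' τ).deriv, deriv_const_mul _ (hθd τ), hRay, hR3]
  ring
end
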